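/- Let p(·) be a measurable exponent with 0 < p₋ ≤ p₊ < ∞ on a probability space, 0 < q < ∞, and b a slowly varying function. Suppose h_n, f, g ∈ L_{p(·),q,b}, h_n → f almost everywhere, and |h_n| ≤ g almost everywhere for all n. Then ‖h_n − f‖_{p(·),q,b} → 0 (dominated convergence theorem for variable Lorentz-Karamata spaces). -/

import Mathlib

open MeasureTheory Set ENNReal Filter Topology

noncomputable section

/-- A measurable function `b : [1,∞) → (0,∞)` is slowly varying if for every `ε > 0`,
`t ^ ε * b t` is equivalent (up to multiplicative constants) to a nondecreasing function
and `t ^ (-ε) * b t` is equivalent to a nonincreasing function on `[1,∞)`. -/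
def SlowlyVarying (b : ℝ → ℝ) : Prop :=
  (∀ t : ℝ, 1 ≤ t → 0 < b t) ∧
  ∀ ε : ℝ, 0 < ε →
    ((∃ g : ℝ → ℝ, MonotoneOn g (Set.Ici 1) ∧ ∃ c > (0:ℝ), ∃ C > (0:ℝ),
        ∀ t : ℝ, 1 ≤ t → c * g t ≤ t ^ ε * b t ∧ t ^ ε * b t ≤ C * g t) ∧
     (∃ g : ℝ → ℝ, AntitoneOn g (Set.Ici 1) ∧ ∃ c > (0:ℝ), ∃ C > (0:ℝ),
        ∀ t : ℝ, 1 ≤ t → c * g t ≤ t ^ (-ε) * b t ∧ t ^ (-ε) * b t ≤ C * g t))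

/-- `γ_b(t) = b (max {t, t⁻¹})` for `t > 0`. -/
def gammaB (b : ℝ → ℝ) (t : ℝ) : ℝ := b (max t t⁻¹)

variable {Ω : Type*} [MeasurableSpace Ω]

/-- The variable Lebesgue quasi-norm
`‖f‖_{p(·)} = inf {λ > 0 : ∫ (|f|/λ)^{p(·)} dμ ≤ 1}`. -/
def vLpNorm (μ : Measure Ω) (p : Ω → ℝ) (f : Ω → ℝ) : ℝ :=
  sInf {lam : ℝ | 0 < lam ∧ ∫⁻ ω, ENNReal.ofReal ((|f ω| / lam) ^ p ω) ∂μ ≤ 1}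

/-- `f ∈ L_{p(·)}` : the modular is finite for some `λ > 0`. -/
def MemVLp (μ : Measure Ω) (p : Ω → ℝ) (f : Ω → ℝ) : Prop :=
  ∃ lam > (0:ℝ), ∫⁻ ω, ENNReal.ofReal ((|f ω| / lam) ^ p ω) ∂μ ≤ 1

/-- `‖χ_A‖_{p(·)}`. -/
def chiNorm (μ : Measure Ω) (p : Ω → ℝ) (A : Set Ω) : ℝ :=
  vLpNorm μ p (A.indicator 1)

/-- The variable Lorentz–Karamata quasi-norm `‖f‖_{p(·),q,b}` (with `q ∈ (0,∞]`). -/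
def vLKNorm (μ : Measure Ω) (p : Ω → ℝ) (q : ℝ≥0∞) (b : ℝ → ℝ) (f : Ω → ℝ) : ℝ≥0∞ :=
  if q = ∞ then
    ⨆ t ∈ Set.Ioi (0:ℝ), ENNReal.ofReal
      (t * chiNorm μ p {ω | t < |f ω|} * gammaB b (chiNorm μ p {ω | t < |f ω|}))
  else
    (∫⁻ t in Set.Ioi (0:ℝ), ENNReal.ofReal
      ((t * chiNorm μ p {ω | t < |f ω|} * gammaB b (chiNorm μ p {ω | t < |f ω|})) ^ q.toReal / t))
      ^ (1 / q.toReal)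

/-!
Since `|h n| ≤ g` a.e. and `h n → f` a.e., also `|f| ≤ g`, so every `h n - f` is dominated by
`2 g`, which lies in the space because the quasi-norm is homogeneous. Convergence a.e. gives
convergence in measure, and when `p ≤ p₊` a set of small measure has small `‖χ_A‖_{p(·)}`; hence
`t ↦ ‖χ_{|h n - f| > t}‖_{p(·)}` tends to `0` pointwise. As `b` need not be measurable, the
factor `c γ_b(c)` of the integrand is replaced by the nondecreasing envelope `√c g(1/c)`, with `g`
nonincreasing and comparable to `s^{-1/2} b(s)` (slow variation with `ε = 1/2`). The two are
comparable on `[0, 1]`, and for the envelope Lebesgue's dominated convergence theorem applies.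
-/

theorem Real.mul_rpow_of_pos_left {a : ℝ} (ha : 0 < a) (y z : ℝ) :
    (a * y) ^ z = a ^ z * y ^ z := by
  rcases le_or_gt 0 y with hy | hy
  · exact Real.mul_rpow ha.le hy
  · rw [Real.rpow_def_of_neg (mul_neg_of_pos_of_neg ha hy), Real.rpow_def_of_neg hy,
      Real.rpow_def_of_pos ha, Real.log_mul ha.ne' hy.ne, add_mul, Real.exp_add]
    ring

theorem lintegral_Ioi_comp_mul_left (F : ℝ → ℝ≥0∞) {a : ℝ} (ha : 0 < a) :
    ∫⁻ t in Ioi 0, F (a * t) = ENNReal.ofReal a⁻¹ * ∫⁻ t in Ioi 0, F t := by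
  have he : MeasurableEmbedding (a * ·) := (Homeomorph.mulLeft₀ a ha.ne').measurableEmbedding
  have hpre : (a * ·) ⁻¹' Ioi (0 : ℝ) = Ioi 0 := by
    ext t; simp [mul_pos_iff_of_pos_left ha]
  calc ∫⁻ t in Ioi 0, F (a * t)
      = ∫⁻ t, F t ∂(volume.restrict ((a * ·) ⁻¹' Ioi 0)).map (a * ·) := by
        rw [hpre, he.lintegral_map]
    _ = ENNReal.ofReal a⁻¹ * ∫⁻ t in Ioi 0, F t := by
        rw [← he.restrict_map, Real.map_volume_mul_left ha.ne', Measure.restrict_smul,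
          lintegral_smul_measure, abs_of_pos (inv_pos.2 ha), smul_eq_mul]

section LKIntegrand

def lkIntegrand (q t x : ℝ) : ℝ≥0∞ := ENNReal.ofReal ((t * x) ^ q / t)

variable {q t x y : ℝ}

theorem lkIntegrand_mono (hq : 0 ≤ q) (ht : 0 ≤ t) (hx : 0 ≤ x) (hxy : x ≤ y) :
    lkIntegrand q t x ≤ lkIntegrand q t y := by
  unfold lkIntegrand
  gcongr

theorem lkIntegrand_const_mul {C : ℝ} (hC : 0 < C) :
    lkIntegrand q t (C * x) = ENNReal.ofReal (C ^ q) * lkIntegrand q t x := by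
  rw [lkIntegrand, lkIntegrand, ← ENNReal.ofReal_mul (by positivity), mul_left_comm,
    Real.mul_rpow_of_pos_left hC, mul_div_assoc]

theorem lkIntegrand_le_of_le_const_mul {C : ℝ} (hq : 0 ≤ q) (ht : 0 ≤ t) (hx : 0 ≤ x)
    (hC : 0 < C) (hxy : x ≤ C * y) :
    lkIntegrand q t x ≤ ENNReal.ofReal (C ^ q) * lkIntegrand q t y :=
  (lkIntegrand_mono hq ht hx hxy).trans_eq (lkIntegrand_const_mul hC)

theorem lkIntegrand_mul_left {a : ℝ} (ha : 0 < a) :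
    lkIntegrand q (a * t) x = ENNReal.ofReal (a ^ (q - 1)) * lkIntegrand q t x := by
  rw [lkIntegrand, lkIntegrand, ← ENNReal.ofReal_mul (by positivity), mul_assoc,
    Real.mul_rpow_of_pos_left ha, mul_div_mul_comm, Real.rpow_sub_one ha.ne']

theorem measurable_lkIntegrand {e : ℝ → ℝ} (he : Measurable e) :
    Measurable fun t => lkIntegrand q t (e t) := by
  unfold lkIntegrand
  fun_prop

theorem tendsto_lkIntegrand_zero {ι : Type*} {l : Filter ι} {x : ι → ℝ} (hq : 0 < q)
    (hx : Tendsto x l (𝓝 0)) : Tendsto (fun i => lkIntegrand q t (x i)) l (𝓝 0) := by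
  have hcont : Continuous fun y => lkIntegrand q t y := by
    unfold lkIntegrand
    exact ENNReal.continuous_ofReal.comp
      (((Real.continuous_rpow_const hq.le).comp (continuous_const.mul continuous_id)).div_const t)
  simpa [Function.comp_def, lkIntegrand, Real.zero_rpow hq.ne'] using (hcont.tendsto 0).comp hx

end LKIntegrand

section VariableLebesgue

variable {μ : Measure Ω} {p : Ω → ℝ}

theorem vLpNorm_nonneg (f : Ω → ℝ) : 0 ≤ vLpNorm μ p f :=
  Real.sInf_nonneg fun _ hlam => hlam.1.le

theorem vLpNorm_le {f : Ω → ℝ} {lam : ℝ} (hlam : 0 < lam)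
    (hf : ∫⁻ ω, ENNReal.ofReal ((|f ω| / lam) ^ p ω) ∂μ ≤ 1) : vLpNorm μ p f ≤ lam :=
  csInf_le ⟨0, fun _ hlam => hlam.1.le⟩ ⟨hlam, hf⟩

theorem vLpNorm_mono_ae {f g : Ω → ℝ} (hp : ∀ᵐ ω ∂μ, 0 ≤ p ω) (hg : MemVLp μ p g)
    (hfg : ∀ᵐ ω ∂μ, |f ω| ≤ |g ω|) : vLpNorm μ p f ≤ vLpNorm μ p g := by
  refine csInf_le_csInf ⟨0, fun _ hlam => hlam.1.le⟩ hg fun lam ⟨hlam, hint⟩ => ⟨hlam, ?_⟩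
  refine le_trans (lintegral_mono_ae ?_) hint
  filter_upwards [hp, hfg] with ω hpω hω
  gcongr

theorem lintegral_rpow_indicator_one_le_one [IsProbabilityMeasure μ] (A : Set Ω) :
    ∫⁻ ω, ENNReal.ofReal ((|A.indicator (1 : Ω → ℝ) ω| / 1) ^ p ω) ∂μ ≤ 1 := by
  refine le_of_le_of_eq (lintegral_mono (g := fun _ => 1) fun ω => ?_) (by simp)
  by_cases hω : ω ∈ A <;> simp [hω, Real.zero_rpow_le_one]

theorem chiNorm_le_one [IsProbabilityMeasure μ] (A : Set Ω) : chiNorm μ p A ≤ 1 :=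
  vLpNorm_le one_pos (lintegral_rpow_indicator_one_le_one A)

theorem chiNorm_mono_ae [IsProbabilityMeasure μ] {A B : Set Ω} (hp : ∀ᵐ ω ∂μ, 0 ≤ p ω)
    (hAB : A ≤ᵐ[μ] B) : chiNorm μ p A ≤ chiNorm μ p B := by
  refine vLpNorm_mono_ae hp ⟨1, one_pos, lintegral_rpow_indicator_one_le_one B⟩
    (hAB.mono fun ω hω => ?_)
  by_cases hA : ω ∈ A
  · simp [hA, show ω ∈ B from hω hA]
  · simp [hA]

theorem chiNorm_le_of_measure_le {A : Set Ω} {pu ε : ℝ} (hp : ∀ᵐ ω ∂μ, 0 < p ω ∧ p ω ≤ pu)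
    (hε : 0 < ε) (hε1 : ε ≤ 1) (hA : μ A ≤ ENNReal.ofReal (ε ^ pu)) : chiNorm μ p A ≤ ε := by
  refine vLpNorm_le hε ?_
  calc ∫⁻ ω, ENNReal.ofReal ((|A.indicator 1 ω| / ε) ^ p ω) ∂μ
      ≤ ∫⁻ ω, A.indicator (fun _ => ENNReal.ofReal (ε ^ (-pu))) ω ∂μ := by
        refine lintegral_mono_ae (hp.mono fun ω hω => ?_)
        by_cases hωA : ω ∈ A
        · have hpow : (1 / ε) ^ p ω ≤ (1 / ε) ^ pu :=
            Real.rpow_le_rpow_of_exponent_le (one_le_one_div hε hε1) hω.2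
          rw [indicator_of_mem hωA, indicator_of_mem hωA]
          refine ENNReal.ofReal_le_ofReal ?_
          simpa [Real.rpow_neg hε.le, Real.inv_rpow hε.le] using hpow
        · simp [hωA, Real.zero_rpow hω.1.ne']
    _ ≤ ENNReal.ofReal (ε ^ (-pu)) * μ A := lintegral_indicator_const_le _ _
    _ ≤ ENNReal.ofReal (ε ^ (-pu)) * ENNReal.ofReal (ε ^ pu) := by gcongr
    _ = 1 := by
        rw [← ENNReal.ofReal_mul (by positivity), ← Real.rpow_add hε, neg_add_cancel,
          Real.rpow_zero, ENNReal.ofReal_one]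

theorem tendsto_chiNorm_of_tendsto_measure {ι : Type*} {l : Filter ι} {A : ι → Set Ω} {pu : ℝ}
    (hp : ∀ᵐ ω ∂μ, 0 < p ω ∧ p ω ≤ pu) (hA : Tendsto (fun i => μ (A i)) l (𝓝 0)) :
    Tendsto (fun i => chiNorm μ p (A i)) l (𝓝 0) := by
  refine tendsto_order.2 ⟨fun a ha => Eventually.of_forall fun i =>
    ha.trans_le (vLpNorm_nonneg _), fun ε hε => ?_⟩
  obtain ⟨δ, hδ, hδ1, hδε⟩ : ∃ δ : ℝ, 0 < δ ∧ δ ≤ 1 ∧ δ < ε :=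
    ⟨min ε 1 / 2, by positivity, by linarith [min_le_right ε 1], by linarith [min_le_left ε 1]⟩
  filter_upwards [hA.eventually_lt_const (ENNReal.ofReal_pos.2 (Real.rpow_pos_of_pos hδ pu))]
    with i hi
  exact (chiNorm_le_of_measure_le hp hδ hδ1 hi.le).trans_lt hδε

end VariableLebesgue

section Distribution

variable {μ : Measure Ω} {p : Ω → ℝ}

def chiNormDistrib (μ : Measure Ω) (p u : Ω → ℝ) (t : ℝ) : ℝ :=
  chiNorm μ p {ω | t < |u ω|}

theorem chiNormDistrib_mem_Icc [IsProbabilityMeasure μ] (u : Ω → ℝ) (t : ℝ) :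
    chiNormDistrib μ p u t ∈ Icc 0 1 :=
  ⟨vLpNorm_nonneg _, chiNorm_le_one _⟩

theorem chiNormDistrib_le_of_le [IsProbabilityMeasure μ] {u v : Ω → ℝ} {s t : ℝ}
    (hp : ∀ᵐ ω ∂μ, 0 ≤ p ω) (huv : ∀ᵐ ω ∂μ, |u ω| ≤ |v ω|) (hst : s ≤ t) :
    chiNormDistrib μ p u t ≤ chiNormDistrib μ p v s :=
  chiNorm_mono_ae hp (huv.mono fun _ hω ht => hst.trans_lt (ht.trans_le hω))

theorem chiNormDistrib_antitone [IsProbabilityMeasure μ] (hp : ∀ᵐ ω ∂μ, 0 ≤ p ω) (u : Ω → ℝ) :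
    Antitone (chiNormDistrib μ p u) :=
  fun _ _ hst => chiNormDistrib_le_of_le hp (ae_of_all _ fun _ => le_rfl) hst

theorem vLKNorm_ofReal {q : ℝ} (hq : 0 ≤ q) (b : ℝ → ℝ) (u : Ω → ℝ) :
    vLKNorm μ p (ENNReal.ofReal q) b u = (∫⁻ t in Ioi 0,
      lkIntegrand q t (chiNormDistrib μ p u t * gammaB b (chiNormDistrib μ p u t))) ^ (1 / q) := by
  simp only [vLKNorm, if_neg ENNReal.ofReal_ne_top, ENNReal.toReal_ofReal hq, lkIntegrand,
    chiNormDistrib, mul_assoc]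

theorem chiNormDistrib_const_mul {a : ℝ} (ha : 0 < a) (u : Ω → ℝ) (t : ℝ) :
    chiNormDistrib μ p (fun ω => a * u ω) t = chiNormDistrib μ p u (a⁻¹ * t) := by
  simp only [chiNormDistrib, abs_mul, abs_of_pos ha, ← div_lt_iff₀' ha, div_eq_inv_mul]

theorem vLKNorm_const_mul {q a : ℝ} (hq : 0 < q) (ha : 0 < a) (b : ℝ → ℝ) (u : Ω → ℝ) :
    vLKNorm μ p (ENNReal.ofReal q) b (fun ω => a * u ω)
      = ENNReal.ofReal a * vLKNorm μ p (ENNReal.ofReal q) b u := by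
  set F : ℝ → ℝ≥0∞ := fun s =>
    lkIntegrand q s (chiNormDistrib μ p u s * gammaB b (chiNormDistrib μ p u s))
  have hF : ∀ t, lkIntegrand q t (chiNormDistrib μ p (fun ω => a * u ω) t
      * gammaB b (chiNormDistrib μ p (fun ω => a * u ω) t))
      = ENNReal.ofReal (a ^ (q - 1)) * F (a⁻¹ * t) := fun t => by
    rw [chiNormDistrib_const_mul ha, ← lkIntegrand_mul_left ha, mul_inv_cancel_left₀ ha.ne']
  have hint : ∫⁻ t in Ioi 0, ENNReal.ofReal (a ^ (q - 1)) * F (a⁻¹ * t)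
      = ENNReal.ofReal (a ^ q) * ∫⁻ t in Ioi 0, F t := by
    rw [lintegral_const_mul' _ _ ENNReal.ofReal_ne_top,
      lintegral_Ioi_comp_mul_left F (inv_pos.2 ha), inv_inv, ← mul_assoc,
      ← ENNReal.ofReal_mul (by positivity), ← Real.rpow_add_one ha.ne', sub_add_cancel]
  rw [vLKNorm_ofReal hq.le, vLKNorm_ofReal hq.le, lintegral_congr hF, hint,
    ENNReal.mul_rpow_of_nonneg _ _ (by positivity), ENNReal.ofReal_rpow_of_nonneg (by positivity)
      (by positivity), one_div, Real.rpow_rpow_inv ha.le hq.ne']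

end Distribution

section Envelope

def halfEnvelope (g : ℝ → ℝ) (c : ℝ) : ℝ := c ^ (2⁻¹ : ℝ) * g c⁻¹

structure SlowlyVaryingEnvelope (b g : ℝ → ℝ) (c₀ C₀ : ℝ) : Prop where
  antitoneOn : AntitoneOn g (Ici 1)
  nonneg : ∀ s, 1 ≤ s → 0 ≤ g s
  c₀_pos : 0 < c₀
  C₀_pos : 0 < C₀
  le_rpow_mul : ∀ s, 1 ≤ s → c₀ * g s ≤ s ^ (-2⁻¹ : ℝ) * b s
  rpow_mul_le : ∀ s, 1 ≤ s → s ^ (-2⁻¹ : ℝ) * b s ≤ C₀ * g s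

variable {b g : ℝ → ℝ} {c : ℝ}

theorem SlowlyVarying.exists_envelope (hb : SlowlyVarying b) :
    ∃ g c₀ C₀, SlowlyVaryingEnvelope b g c₀ C₀ := by
  obtain ⟨hpos, hSV⟩ := hb
  obtain ⟨g, hg, c₀, hc₀, C₀, hC₀, hcmp⟩ := (hSV 2⁻¹ (by norm_num)).2
  refine ⟨g, c₀, C₀, hg, fun s hs => ?_, hc₀, hC₀, fun s hs => (hcmp s hs).1,
    fun s hs => (hcmp s hs).2⟩
  have hbs : 0 < s ^ (-2⁻¹ : ℝ) * b s := by
    have := hpos s hs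
    positivity
  exact (pos_of_mul_pos_right (hbs.trans_le (hcmp s hs).2) hC₀.le).le

theorem one_le_inv_of_mem_Ioc (hc : c ∈ Ioc 0 1) : 1 ≤ c⁻¹ :=
  one_le_inv₀ hc.1 |>.2 hc.2

theorem halfEnvelope_zero : halfEnvelope g 0 = 0 := by
  simp [halfEnvelope]

theorem halfEnvelope_nonneg (hg : ∀ s, 1 ≤ s → 0 ≤ g s) (hc : c ∈ Icc 0 1) :
    0 ≤ halfEnvelope g c := by
  rcases hc.1.eq_or_lt with rfl | hc0
  · rw [halfEnvelope_zero]
  · exact mul_nonneg (by positivity) (hg _ (one_le_inv_of_mem_Ioc ⟨hc0, hc.2⟩))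

theorem halfEnvelope_monotoneOn (hg : AntitoneOn g (Ici 1)) (hg0 : ∀ s, 1 ≤ s → 0 ≤ g s) :
    MonotoneOn (halfEnvelope g) (Icc 0 1) := by
  intro c hc c' hc' hcc'
  rcases hc.1.eq_or_lt with rfl | hc0
  · exact halfEnvelope_zero.trans_le (halfEnvelope_nonneg hg0 hc')
  have hinv' : 1 ≤ c'⁻¹ := one_le_inv_of_mem_Ioc ⟨hc0.trans_le hcc', hc'.2⟩
  have hinv : 1 ≤ c⁻¹ := one_le_inv_of_mem_Ioc ⟨hc0, hc.2⟩
  exact mul_le_mul (by gcongr) (hg (mem_Ici.2 hinv') (mem_Ici.2 hinv) (by gcongr))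
    (hg0 _ hinv) (Real.rpow_nonneg hc'.1 _)

theorem tendsto_halfEnvelope_zero {ι : Type*} {l : Filter ι} {x : ι → ℝ}
    (hg : AntitoneOn g (Ici 1)) (hg0 : ∀ s, 1 ≤ s → 0 ≤ g s) (hx : ∀ i, x i ∈ Icc 0 1)
    (hlim : Tendsto x l (𝓝 0)) : Tendsto (fun i => halfEnvelope g (x i)) l (𝓝 0) := by
  have hle : ∀ i, halfEnvelope g (x i) ≤ x i ^ (2⁻¹ : ℝ) * g 1 := fun i => by
    rcases (hx i).1.eq_or_lt with h0 | hpos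
    · rw [← h0, halfEnvelope_zero, Real.zero_rpow (by norm_num), zero_mul]
    · have hinv := one_le_inv_of_mem_Ioc ⟨hpos, (hx i).2⟩
      exact mul_le_mul_of_nonneg_left (hg (mem_Ici.2 le_rfl) (mem_Ici.2 hinv) hinv)
        (by positivity)
  have hbound : Tendsto (fun i => x i ^ (2⁻¹ : ℝ) * g 1) l (𝓝 0) := by
    have hsqrt := ((Real.continuous_rpow_const (by norm_num : (0 : ℝ) ≤ 2⁻¹)).tendsto 0).comp hlim
    simpa [Real.zero_rpow] using hsqrt.mul_const (g 1)
  exact squeeze_zero (fun i => halfEnvelope_nonneg hg0 (hx i)) hle hbound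

theorem mul_gammaB_eq (hc : c ∈ Ioc 0 1) :
    c * gammaB b c = c ^ (2⁻¹ : ℝ) * (c⁻¹ ^ (-2⁻¹ : ℝ) * b c⁻¹) := by
  have hc1 := one_le_inv_of_mem_Ioc hc
  rw [gammaB, max_eq_right (hc.2.trans hc1), Real.rpow_neg (by positivity),
    Real.inv_rpow hc.1.le, inv_inv, ← mul_assoc, ← Real.rpow_add hc.1]
  norm_num

theorem mul_gammaB_le_halfEnvelope {C : ℝ} (hg : ∀ s, 1 ≤ s → s ^ (-2⁻¹ : ℝ) * b s ≤ C * g s)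
    (hc : c ∈ Icc 0 1) : c * gammaB b c ≤ C * halfEnvelope g c := by
  rcases hc.1.eq_or_lt with rfl | hc0
  · simp [halfEnvelope_zero]
  have hc' : c ∈ Ioc 0 1 := ⟨hc0, hc.2⟩
  rw [mul_gammaB_eq hc', halfEnvelope, mul_left_comm C]
  exact mul_le_mul_of_nonneg_left (hg _ (one_le_inv_of_mem_Ioc hc')) (by positivity)

theorem halfEnvelope_le_mul_gammaB {c₀ : ℝ}
    (hg : ∀ s, 1 ≤ s → c₀ * g s ≤ s ^ (-2⁻¹ : ℝ) * b s) (hc : c ∈ Icc 0 1) :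
    c₀ * halfEnvelope g c ≤ c * gammaB b c := by
  rcases hc.1.eq_or_lt with rfl | hc0
  · simp [halfEnvelope_zero]
  have hc' : c ∈ Ioc 0 1 := ⟨hc0, hc.2⟩
  rw [mul_gammaB_eq hc', halfEnvelope, mul_left_comm c₀]
  exact mul_le_mul_of_nonneg_left (hg _ (one_le_inv_of_mem_Ioc hc')) (by positivity)

theorem SlowlyVaryingEnvelope.mul_gammaB_nonneg {c₀ C₀ : ℝ}
    (hE : SlowlyVaryingEnvelope b g c₀ C₀) (hc : c ∈ Icc 0 1) : 0 ≤ c * gammaB b c :=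
  (mul_nonneg hE.c₀_pos.le (halfEnvelope_nonneg hE.nonneg hc)).trans
    (halfEnvelope_le_mul_gammaB hE.le_rpow_mul hc)

end Envelope

section DominatedConvergence

variable {μ : Measure Ω} [IsProbabilityMeasure μ] {p : Ω → ℝ} {b g : ℝ → ℝ} {c₀ C₀ q : ℝ}

theorem vLKNorm_le_envelope (hE : SlowlyVaryingEnvelope b g c₀ C₀) (hq : 0 < q) (u : Ω → ℝ) :
    vLKNorm μ p (ENNReal.ofReal q) b u ≤ (ENNReal.ofReal (C₀ ^ q) *
      ∫⁻ t in Ioi 0, lkIntegrand q t (halfEnvelope g (chiNormDistrib μ p u t))) ^ (1 / q) := by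
  rw [vLKNorm_ofReal hq.le, ← lintegral_const_mul' _ _ ENNReal.ofReal_ne_top]
  refine ENNReal.rpow_le_rpow (setLIntegral_mono' measurableSet_Ioi fun t ht => ?_)
    (by positivity)
  have hc := chiNormDistrib_mem_Icc (μ := μ) (p := p) u t
  exact lkIntegrand_le_of_le_const_mul hq.le (le_of_lt ht) (hE.mul_gammaB_nonneg hc) hE.C₀_pos
    (mul_gammaB_le_halfEnvelope hE.rpow_mul_le hc)

theorem lintegral_envelope_ne_top (hE : SlowlyVaryingEnvelope b g c₀ C₀) (hq : 0 < q)
    {u : Ω → ℝ} (hu : vLKNorm μ p (ENNReal.ofReal q) b u < ∞) :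
    ∫⁻ t in Ioi 0, lkIntegrand q t (halfEnvelope g (chiNormDistrib μ p u t)) ≠ ∞ := by
  rw [vLKNorm_ofReal hq.le, ENNReal.rpow_lt_top_iff_of_pos (by positivity)] at hu
  refine ne_top_of_le_ne_top (ENNReal.mul_ne_top (ENNReal.ofReal_ne_top (r := c₀⁻¹ ^ q)) hu.ne) ?_
  rw [← lintegral_const_mul' (ENNReal.ofReal (c₀⁻¹ ^ q)) _ ENNReal.ofReal_ne_top]
  refine setLIntegral_mono' measurableSet_Ioi fun t ht => ?_
  have hc := chiNormDistrib_mem_Icc (μ := μ) (p := p) u t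
  exact lkIntegrand_le_of_le_const_mul hq.le (le_of_lt ht) (halfEnvelope_nonneg hE.nonneg hc)
    (inv_pos.2 hE.c₀_pos)
    ((le_inv_mul_iff₀ hE.c₀_pos).2 (halfEnvelope_le_mul_gammaB hE.le_rpow_mul hc))

theorem measurable_lkIntegrand_halfEnvelope (hp : ∀ᵐ ω ∂μ, 0 ≤ p ω) (hg : AntitoneOn g (Ici 1))
    (hg0 : ∀ s, 1 ≤ s → 0 ≤ g s) (u : Ω → ℝ) :
    Measurable fun t => lkIntegrand q t (halfEnvelope g (chiNormDistrib μ p u t)) :=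
  measurable_lkIntegrand <| Antitone.measurable fun _ _ hst =>
    halfEnvelope_monotoneOn hg hg0 (chiNormDistrib_mem_Icc u _) (chiNormDistrib_mem_Icc u _)
      (chiNormDistrib_antitone hp u hst)

theorem tendsto_vLKNorm_sub_of_tendstoInMeasure {pu : ℝ} (hp : ∀ᵐ ω ∂μ, 0 < p ω ∧ p ω ≤ pu)
    (hq : 0 < q) (hb : SlowlyVarying b) {h : ℕ → Ω → ℝ} {f G : Ω → ℝ}
    (hconv : TendstoInMeasure μ h atTop f) (hdom : ∀ n, ∀ᵐ ω ∂μ, |h n ω - f ω| ≤ G ω)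
    (hG : vLKNorm μ p (ENNReal.ofReal q) b G < ∞) :
    Tendsto (fun n => vLKNorm μ p (ENNReal.ofReal q) b (fun ω => h n ω - f ω)) atTop (𝓝 0) := by
  obtain ⟨g, c₀, C₀, hE⟩ := hb.exists_envelope
  have hp₀ : ∀ᵐ ω ∂μ, 0 ≤ p ω := hp.mono fun _ hω => hω.1.le
  set Ψ : (Ω → ℝ) → ℝ → ℝ≥0∞ := fun u t => lkIntegrand q t (halfEnvelope g (chiNormDistrib μ p u t))
  have hΨ_le : ∀ n, ∀ t ∈ Ioi (0 : ℝ), Ψ (fun ω => h n ω - f ω) t ≤ Ψ G t := fun n t ht =>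
    lkIntegrand_mono hq.le (le_of_lt ht)
      (halfEnvelope_nonneg hE.nonneg (chiNormDistrib_mem_Icc _ _))
      (halfEnvelope_monotoneOn hE.antitoneOn hE.nonneg (chiNormDistrib_mem_Icc _ _)
        (chiNormDistrib_mem_Icc _ _)
        (chiNormDistrib_le_of_le hp₀ ((hdom n).mono fun _ hω => hω.trans (le_abs_self _)) le_rfl))
  have hΨ_lim : ∀ t ∈ Ioi (0 : ℝ), Tendsto (fun n => Ψ (fun ω => h n ω - f ω) t) atTop (𝓝 0) := by
    intro t ht
    have hμ : Tendsto (fun n => μ {ω | t < |h n ω - f ω|}) atTop (𝓝 0) :=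
      tendsto_of_tendsto_of_tendsto_of_le_of_le tendsto_const_nhds
        (tendstoInMeasure_iff_norm.1 hconv t ht) (fun _ => zero_le)
        fun n => measure_mono fun ω (hω : t < |h n ω - f ω|) => show t ≤ ‖h n ω - f ω‖ from hω.le
    exact tendsto_lkIntegrand_zero hq (tendsto_halfEnvelope_zero hE.antitoneOn hE.nonneg
      (fun n => chiNormDistrib_mem_Icc _ t) (tendsto_chiNorm_of_tendsto_measure hp hμ))
  have hDCT : Tendsto (fun n => ∫⁻ t in Ioi 0, Ψ (fun ω => h n ω - f ω) t) atTop (𝓝 0) := by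
    simpa using tendsto_lintegral_of_dominated_convergence (Ψ G)
      (fun n => measurable_lkIntegrand_halfEnvelope hp₀ hE.antitoneOn hE.nonneg _)
      (fun n => (ae_restrict_mem measurableSet_Ioi).mono (hΨ_le n))
      (lintegral_envelope_ne_top hE hq hG) ((ae_restrict_mem measurableSet_Ioi).mono hΨ_lim)
  have hbound : Tendsto (fun n => (ENNReal.ofReal (C₀ ^ q) *
      ∫⁻ t in Ioi 0, Ψ (fun ω => h n ω - f ω) t) ^ (1 / q)) atTop (𝓝 0) := by
    simpa [Function.comp_def, ENNReal.zero_rpow_of_pos (inv_pos.2 hq)] using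
      ((ENNReal.continuous_rpow_const (y := 1 / q)).tendsto _).comp
        (ENNReal.Tendsto.const_mul (a := ENNReal.ofReal (C₀ ^ q)) hDCT
          (Or.inr ENNReal.ofReal_ne_top))
  exact tendsto_of_tendsto_of_tendsto_of_le_of_le tendsto_const_nhds hbound
    (fun _ => zero_le) fun n => vLKNorm_le_envelope hE hq _

end DominatedConvergence

theorem vLKNorm_dominated_convergence_general (μ : Measure Ω) [IsProbabilityMeasure μ]
    (p : Ω → ℝ) (pl pu : ℝ) (hpl : 0 < pl)
    (hp : ∀ᵐ ω ∂μ, pl ≤ p ω ∧ p ω ≤ pu)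
    (q : ℝ) (hq : 0 < q) (b : ℝ → ℝ) (hb : SlowlyVarying b)
    (h : ℕ → Ω → ℝ) (f g : Ω → ℝ)
    (hhm : ∀ n, Measurable (h n))
    (hgL : vLKNorm μ p (ENNReal.ofReal q) b g < ∞)
    (hconv : ∀ᵐ ω ∂μ, Filter.Tendsto (fun n => h n ω) Filter.atTop (nhds (f ω)))
    (hdom : ∀ n, ∀ᵐ ω ∂μ, |h n ω| ≤ g ω) :
    Filter.Tendsto (fun n => vLKNorm μ p (ENNReal.ofReal q) b (fun ω => h n ω - f ω))
      Filter.atTop (nhds 0) := by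
  have hfg : ∀ᵐ ω ∂μ, |f ω| ≤ g ω := by
    filter_upwards [hconv, ae_all_iff.2 hdom] with ω hω hωg
    exact le_of_tendsto' ((continuous_abs.tendsto _).comp hω) hωg
  refine tendsto_vLKNorm_sub_of_tendstoInMeasure
    (hp.mono fun _ hω => ⟨hpl.trans_le hω.1, hω.2⟩) hq hb
    (tendstoInMeasure_of_tendsto_ae (fun n => (hhm n).aestronglyMeasurable) hconv)
    (G := fun ω => 2 * g ω) (fun n => ?_) ?_
  · filter_upwards [hdom n, hfg] with ω hhω hfω
    linarith [abs_sub (h n ω) (f ω)]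
  · rw [vLKNorm_const_mul hq two_pos]
    exact ENNReal.mul_lt_top ENNReal.ofReal_lt_top hgL

/-- Dominated convergence theorem for variable Lorentz–Karamata spaces. -/
theorem vLKNorm_dominated_convergence (μ : Measure Ω) [IsProbabilityMeasure μ]
    (p : Ω → ℝ) (pl pu : ℝ) (hpl : 0 < pl) (hple : pl ≤ pu)
    (hp : ∀ᵐ ω ∂μ, pl ≤ p ω ∧ p ω ≤ pu)
    (q : ℝ) (hq : 0 < q) (b : ℝ → ℝ) (hb : SlowlyVarying b)
    (h : ℕ → Ω → ℝ) (f g : Ω → ℝ)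
    (hhm : ∀ n, Measurable (h n)) (hfm : Measurable f) (hgm : Measurable g)
    (hhL : ∀ n, vLKNorm μ p (ENNReal.ofReal q) b (h n) < ∞)
    (hfL : vLKNorm μ p (ENNReal.ofReal q) b f < ∞)
    (hgL : vLKNorm μ p (ENNReal.ofReal q) b g < ∞)
    (hconv : ∀ᵐ ω ∂μ, Filter.Tendsto (fun n => h n ω) Filter.atTop (nhds (f ω)))
    (hdom : ∀ n, ∀ᵐ ω ∂μ, |h n ω| ≤ g ω) :
    Filter.Tendsto (fun n => vLKNorm μ p (ENNReal.ofReal q) b (fun ω => h n ω - f ω))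
      Filter.atTop (nhds 0) :=
  vLKNorm_dominated_convergence_general μ p pl pu hpl hp q hq b hb h f g hhm hgL hconv hdom
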